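/- arXiv:1712.08004 — 2 statements merged into one kernel-verified Lean document; each statement's English description precedes it below -/
import Mathlib

section
/- Let K be a field of characteristic 0 and let K⟨x⟩† be the ring of power series Σ a_n x^n over K (with non-archimedean absolute value from a complete DVR) satisfying |a_n| ≤ C|π|^{αn} for some C, α > 0. Let d: K⟨x⟩† → K⟨x⟩† be the derivative and i the integration map i(Σ a_n x^n) = Σ (a_n/(n+1))x^{n+1}. Then d ∘ i = id and i ∘ d = id − P₀, where P₀(Σ a_n x^n) = a₀. Consequently the kernel of the evaluation-at-0 map on the two-term de Rham complex K⟨x⟩† →^d K⟨x⟩†·dx is contractible. -/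
/-!
Both identities are coefficientwise computations. For the overconvergence, write the bound
`|aₙ| ≤ C |π|^(α n)` additively as `ν aₙ ≥ α n + c`. Differentiation multiplies `aₙ₊₁` by
`n + 1`, whose valuation is nonnegative. Integration divides by `n + 1`, which costs
`ν (n + 1)`; this is `O(log n)` because `ν` is additive on `ℕ` and bounded on primes (at most
one prime, the residue characteristic, lies in `(π)`), hence is absorbed by halving `α`.
-/

section RealBounds

open Real

lemma exists_mul_log_le_mul_add {B β : ℝ} (hB : 0 ≤ B) (hβ : 0 < β) :
    ∃ K₀ : ℝ, ∀ x > 0, B * log x ≤ β * x + K₀ := by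
  set δ := β / (B + 1)
  have hδ : 0 < δ := by positivity
  refine ⟨B * (-1 - log δ), fun x hx => ?_⟩
  have hlog : log x ≤ δ * x - 1 - log δ := by
    have := log_le_sub_one_of_pos (mul_pos hδ hx)
    rw [log_mul hδ.ne' hx.ne'] at this
    linarith
  have hBδ : B * δ ≤ β := by
    rw [mul_div_assoc', div_le_iff₀ (by positivity)]
    nlinarith
  nlinarith [mul_le_mul_of_nonneg_left hlog hB, mul_le_mul_of_nonneg_right hBδ hx.le]

section AdditiveArithmetic

variable {f : ℕ → ℝ} (hmul : ∀ a b, a ≠ 0 → b ≠ 0 → f (a * b) = f a + f b)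
include hmul

lemma mul_log_two_le_mul_log_of_add {M : ℝ} (hM : 0 ≤ M) (hprime : ∀ p, p.Prime → f p ≤ M)
    {n : ℕ} (hn : n ≠ 0) : f n * log 2 ≤ M * log n := by
  induction n using Nat.recOnMul with
  | zero => exact absurd rfl hn
  | one => simp [show f 1 = 0 by simpa using hmul 1 1 one_ne_zero one_ne_zero]
  | prime p hp =>
    have hlog2 : 0 < log 2 := log_pos one_lt_two
    have hlogp : log 2 ≤ log p := log_le_log two_pos (by exact_mod_cast hp.two_le)
    nlinarith [hprime p hp]
  | mul a b iha ihb =>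
    have ha : a ≠ 0 := left_ne_zero_of_mul hn
    have hb : b ≠ 0 := right_ne_zero_of_mul hn
    rw [hmul a b ha hb, Nat.cast_mul, log_mul (by exact_mod_cast ha) (by exact_mod_cast hb)]
    linarith [iha ha, ihb hb]

lemma exists_le_mul_add_of_add {M : ℝ} (hM : 0 ≤ M) (hprime : ∀ p, p.Prime → f p ≤ M)
    {β : ℝ} (hβ : 0 < β) : ∃ K₀ : ℝ, ∀ n : ℕ, n ≠ 0 → f n ≤ β * n + K₀ := by
  obtain ⟨K₀, hK₀⟩ := exists_mul_log_le_mul_add (div_nonneg hM (log_pos one_lt_two).le) hβ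
  refine ⟨K₀, fun n hn => ?_⟩
  have h := mul_log_two_le_mul_log_of_add hmul hM hprime hn
  calc f n ≤ M / log 2 * log n := by
        rw [div_mul_eq_mul_div, le_div_iff₀ (log_pos one_lt_two)]; exact h
    _ ≤ β * n + K₀ := hK₀ n (by exact_mod_cast Nat.pos_of_ne_zero hn)

end AdditiveArithmetic

end RealBounds

lemma Nat.Prime.eq_of_dvd_natCast {R : Type*} [CommRing R] {π : R} (hπ : ¬IsUnit π)
    {p q : ℕ} (hp : p.Prime) (hq : q.Prime) (hπp : π ∣ (p : R)) (hπq : π ∣ (q : R)) :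
    p = q := by
  by_contra hpq
  exact hπ (((Nat.coprime_primes hp hq).mpr hpq).cast.isUnit_of_dvd' hπp hπq)

lemma Real.rpow_le_mul_rpow_iff {ε C : ℝ} (hε0 : 0 < ε) (hε1 : ε < 1) (hC : 0 < C) {s t : ℝ} :
    ε ^ t ≤ C * ε ^ s ↔ logb ε C + s ≤ t := by
  conv_lhs => rw [← rpow_logb hε0 hε1.ne hC, ← rpow_add hε0]
  exact rpow_le_rpow_left_iff_of_base_lt_one hε0 hε1

section DiscreteValuation

variable {V : Type*} [CommRing V] {π : V} (hπ : Irreducible π)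
  {K : Type*} [Field K] [Algebra V K] [IsFractionRing V K]
include hπ

lemma Irreducible.algebraMap_ne_zero : algebraMap V K π ≠ 0 :=
  IsFractionRing.to_map_eq_zero_iff.not.mpr hπ.ne_zero

variable [IsDomain V] [IsDiscreteValuationRing V]

lemma Irreducible.eq_of_unit_mul_zpow_eq {u u' : Vˣ} {m n : ℤ}
    (h : algebraMap V K u * algebraMap V K π ^ m = algebraMap V K u' * algebraMap V K π ^ n) :
    m = n := by
  wlog hmn : m ≤ n generalizing u u' m n
  · exact (this h.symm (le_of_not_ge hmn)).symm
  obtain ⟨k, rfl⟩ := Int.le.dest hmn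
  have hunit : algebraMap V K u = algebraMap V K (u' * π ^ k) := by
    rw [zpow_add₀ (hπ.algebraMap_ne_zero (K := K)), zpow_natCast, mul_comm (_ ^ m), ← mul_assoc,
      mul_left_inj' (zpow_ne_zero _ hπ.algebraMap_ne_zero)] at h
    simpa using h
  have := IsDiscreteValuationRing.unit_mul_pow_congr_pow hπ hπ u u' 0 k
    (by simpa using IsFractionRing.injective V K hunit)
  omega

variable (ν : K → ℤ)
  (hν : ∀ x : K, x ≠ 0 → ∃ u : Vˣ, x = algebraMap V K u * algebraMap V K π ^ ν x)
include hν

lemma val_eq_of_eq_unit_mul_zpow {x : K} (u : Vˣ) (m : ℤ)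
    (hx : x = algebraMap V K u * algebraMap V K π ^ m) : ν x = m := by
  have hx0 : x ≠ 0 := hx ▸ mul_ne_zero ((u.isUnit.map _).ne_zero)
    (zpow_ne_zero _ hπ.algebraMap_ne_zero)
  obtain ⟨u₀, hu₀⟩ := hν x hx0
  exact hπ.eq_of_unit_mul_zpow_eq (hu₀.symm.trans hx)

lemma val_mul {x y : K} (hx : x ≠ 0) (hy : y ≠ 0) : ν (x * y) = ν x + ν y := by
  obtain ⟨u, hu⟩ := hν x hx
  obtain ⟨w, hw⟩ := hν y hy
  refine val_eq_of_eq_unit_mul_zpow hπ ν hν (u * w) _ ?_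
  rw [Units.val_mul, map_mul, zpow_add₀ hπ.algebraMap_ne_zero]
  nth_rw 1 [hu, hw]
  ring

variable [CharZero K]

lemma exists_natCast_eq_unit_mul_pow_val {n : ℕ} (hn : n ≠ 0) :
    ∃ (u : Vˣ) (k : ℕ), (n : V) = u * π ^ k ∧ ν n = k := by
  have hnV : (n : V) ≠ 0 := fun h => hn (by simpa using congrArg (algebraMap V K) h)
  obtain ⟨k, u, hk⟩ := IsDiscreteValuationRing.eq_unit_mul_pow_irreducible hnV hπ
  refine ⟨u, k, hk, val_eq_of_eq_unit_mul_zpow hπ ν hν u k ?_⟩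
  rw [← map_natCast (algebraMap V K), hk, map_mul, map_pow, zpow_natCast]

lemma val_natCast_nonneg {n : ℕ} (hn : n ≠ 0) : 0 ≤ ν n := by
  obtain ⟨u, k, -, hk⟩ := exists_natCast_eq_unit_mul_pow_val hπ ν hν hn
  omega

lemma dvd_natCast_of_val_pos {n : ℕ} (hn : 0 < ν n) : π ∣ (n : V) := by
  rcases eq_or_ne n 0 with rfl | hn0
  · simp
  obtain ⟨u, k, hnk, hk⟩ := exists_natCast_eq_unit_mul_pow_val hπ ν hν hn0
  rw [hnk]
  exact (dvd_pow_self π (by omega)).mul_left _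

lemma exists_forall_prime_val_le : ∃ M : ℝ, 0 ≤ M ∧ ∀ p : ℕ, p.Prime → (ν p : ℝ) ≤ M := by
  by_cases h : ∃ p : ℕ, p.Prime ∧ 0 < ν p
  · obtain ⟨p, hp, hpos⟩ := h
    refine ⟨ν p, by exact_mod_cast hpos.le, fun q hq => ?_⟩
    by_cases hqpos : 0 < ν q
    · rw [hq.eq_of_dvd_natCast hπ.not_isUnit hp (dvd_natCast_of_val_pos hπ ν hν hqpos)
        (dvd_natCast_of_val_pos hπ ν hν hpos)]
    · exact_mod_cast (le_of_not_gt hqpos).trans hpos.le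
  · simp only [not_exists, not_and, not_lt] at h
    exact ⟨0, le_rfl, fun q hq => by exact_mod_cast h q hq⟩

lemma exists_val_natCast_le_mul_add {β : ℝ} (hβ : 0 < β) :
    ∃ K₀ : ℝ, ∀ n : ℕ, n ≠ 0 → (ν n : ℝ) ≤ β * n + K₀ := by
  obtain ⟨M, hM, hprime⟩ := exists_forall_prime_val_le hπ ν hν
  refine exists_le_mul_add_of_add (f := fun n : ℕ => (ν n : ℝ)) (fun a b ha hb => ?_) hM hprime hβ
  rw [Nat.cast_mul, val_mul hπ ν hν (by exact_mod_cast ha) (by exact_mod_cast hb), Int.cast_add]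

end DiscreteValuation

/-- The additive form of `|aₙ| ≤ C |π|^(α n)`: the valuations `ν aₙ` grow at least linearly. -/
def IsOverconvergent {K : Type*} [Zero K] (ν : K → ℤ) (a : ℕ → K) : Prop :=
  ∃ c : ℝ, ∃ α > (0 : ℝ), ∀ n : ℕ, a n ≠ 0 → α * n + c ≤ ν (a n)

lemma isOverconvergent_iff {K : Type*} [Zero K] [DecidableEq K] {ν : K → ℤ} {ε : ℝ}
    (hε0 : 0 < ε) (hε1 : ε < 1) {a : ℕ → K} :
    IsOverconvergent ν a ↔ ∃ C > (0 : ℝ), ∃ α > (0 : ℝ), ∀ n : ℕ,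
      (if a n = 0 then (0 : ℝ) else ε ^ ν (a n)) ≤ C * ε ^ (α * n) := by
  have bound_iff : ∀ C > (0 : ℝ), ∀ (α : ℝ) (n : ℕ),
      (if a n = 0 then (0 : ℝ) else ε ^ ν (a n)) ≤ C * ε ^ (α * n) ↔
        (a n ≠ 0 → Real.logb ε C + α * n ≤ ν (a n)) := by
    intro C hC α n
    split_ifs with h
    · simpa [h] using by positivity
    · simp only [ne_eq, h, not_false_eq_true, forall_const]
      rw [← Real.rpow_intCast, Real.rpow_le_mul_rpow_iff hε0 hε1 hC]
  constructor
  · rintro ⟨c, α, hα, h⟩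
    refine ⟨ε ^ c, Real.rpow_pos_of_pos hε0 c, α, hα, fun n => ?_⟩
    rw [bound_iff _ (Real.rpow_pos_of_pos hε0 c), Real.logb_rpow hε0 hε1.ne]
    exact fun hn => by linarith [h n hn]
  · rintro ⟨C, hC, α, hα, h⟩
    exact ⟨Real.logb ε C, α, hα, fun n hn => by linarith [(bound_iff C hC α n).mp (h n) hn]⟩

section Coefficients

variable {K : Type*} [Field K]

def coeffDeriv (a : ℕ → K) : ℕ → K := fun n => ((n : K) + 1) * a (n + 1)

def coeffIntegral (a : ℕ → K) : ℕ → K := fun n => if n = 0 then 0 else a (n - 1) / (n : K)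

variable [CharZero K]

lemma coeffDeriv_coeffIntegral (a : ℕ → K) : coeffDeriv (coeffIntegral a) = a := by
  funext n
  have hn : (n : K) + 1 ≠ 0 := by exact_mod_cast n.succ_ne_zero
  simp only [coeffDeriv, coeffIntegral, Nat.succ_ne_zero, if_false, Nat.add_sub_cancel,
    Nat.cast_succ]
  field_simp

lemma coeffIntegral_coeffDeriv (a : ℕ → K) :
    coeffIntegral (coeffDeriv a) = a - Pi.single 0 (a 0) := by
  funext n
  cases n with
  | zero => simp [coeffIntegral]
  | succ m =>
    have hm : (m : K) + 1 ≠ 0 := by exact_mod_cast m.succ_ne_zero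
    simp only [coeffIntegral, coeffDeriv, Nat.succ_ne_zero, if_false, Nat.add_sub_cancel,
      Nat.cast_succ, Pi.sub_apply, ne_eq, not_false_eq_true, Pi.single_eq_of_ne, sub_zero]
    field_simp

variable {ν : K → ℤ} (hmul : ∀ x y : K, x ≠ 0 → y ≠ 0 → ν (x * y) = ν x + ν y)
include hmul

lemma isOverconvergent_coeffDeriv (hnonneg : ∀ n : ℕ, n ≠ 0 → 0 ≤ ν n) {a : ℕ → K}
    (ha : IsOverconvergent ν a) : IsOverconvergent ν (coeffDeriv a) := by
  obtain ⟨c, α, hα, h⟩ := ha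
  refine ⟨c, α, hα, fun n hn => ?_⟩
  have hn1 : ((n + 1 : ℕ) : K) ≠ 0 := by exact_mod_cast n.succ_ne_zero
  have ha1 : a (n + 1) ≠ 0 := right_ne_zero_of_mul hn
  have hval : ν (coeffDeriv a n) = ν ((n + 1 : ℕ) : K) + ν (a (n + 1)) := by
    rw [← hmul _ _ hn1 ha1, coeffDeriv, Nat.cast_succ]
  have hnn : (0 : ℝ) ≤ ν ((n + 1 : ℕ) : K) := by exact_mod_cast hnonneg (n + 1) n.succ_ne_zero
  have hgrowth := h (n + 1) ha1
  rw [hval, Int.cast_add]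
  push_cast at hgrowth
  linarith

lemma isOverconvergent_coeffIntegral
    (hsub : ∀ β > (0 : ℝ), ∃ K₀ : ℝ, ∀ n : ℕ, n ≠ 0 → (ν n : ℝ) ≤ β * n + K₀) {a : ℕ → K}
    (ha : IsOverconvergent ν a) : IsOverconvergent ν (coeffIntegral a) := by
  obtain ⟨c, α, hα, h⟩ := ha
  obtain ⟨K₀, hK₀⟩ := hsub (α / 2) (by positivity)
  refine ⟨c - α - K₀, α / 2, by positivity, fun n hn => ?_⟩
  cases n with
  | zero => simp [coeffIntegral] at hn
  | succ m =>
    have hm : ((m + 1 : ℕ) : K) ≠ 0 := by exact_mod_cast m.succ_ne_zero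
    simp only [coeffIntegral, Nat.succ_ne_zero, if_false, Nat.add_sub_cancel] at hn ⊢
    have ham : a m ≠ 0 := fun h0 => hn (by rw [h0, zero_div])
    have hval : ν (a m) = ν (a m / ((m + 1 : ℕ) : K)) + ν ((m + 1 : ℕ) : K) := by
      rw [← hmul _ _ hn hm, div_mul_cancel₀ _ hm]
    have hgrowth := h m ham
    have hsublinear := hK₀ (m + 1) m.succ_ne_zero
    rw [hval, Int.cast_add] at hgrowth
    have hshift : α * ((m + 1 : ℕ) : ℝ) = α * m + α := by push_cast; ring
    linarith

end Coefficients

open scoped Classical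

theorem dagger_deRham_contractible_general (V : Type*) [CommRing V] [IsDomain V]
    [IsDiscreteValuationRing V] (π : V) (hπ : Irreducible π)
    (K : Type*) [Field K] [CharZero K] [Algebra V K] [IsFractionRing V K]
    (ν : K → ℤ)
    (hν : ∀ x : K, x ≠ 0 → ∃ u : Vˣ,
      x = algebraMap V K u * (algebraMap V K π) ^ (ν x))
    (ε : ℝ) (hε0 : 0 < ε) (hε1 : ε < 1)
    (D : Set (ℕ → K))
    (hD : D = {a : ℕ → K | ∃ C > (0 : ℝ), ∃ α > (0 : ℝ), ∀ n : ℕ,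
      (if a n = 0 then (0 : ℝ) else ε ^ ν (a n)) ≤ C * ε ^ (α * n)})
    (d i P₀ : (ℕ → K) → (ℕ → K))
    (hd : ∀ a n, d a n = ((n : K) + 1) * a (n + 1))
    (hi : ∀ a n, i a n = if n = 0 then 0 else a (n - 1) / (n : K))
    (hP₀ : ∀ a n, P₀ a n = if n = 0 then a 0 else 0) :
    (∀ a, d (i a) = a) ∧
    (∀ a, i (d a) = a - P₀ a) ∧
    (∀ a ∈ D, i a ∈ D) ∧ (∀ a ∈ D, d a ∈ D) ∧
    (∀ a ∈ D, a 0 = 0 → i (d a) = a) := by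
  obtain rfl : d = coeffDeriv := funext fun a => funext (hd a)
  obtain rfl : i = coeffIntegral := funext fun a => funext (hi a)
  obtain rfl : P₀ = fun a => Pi.single 0 (a 0) :=
    funext fun a => funext fun n => by rw [hP₀, Pi.single_apply]
  subst hD
  have hmul : ∀ x y : K, x ≠ 0 → y ≠ 0 → ν (x * y) = ν x + ν y :=
    fun _ _ => val_mul hπ ν hν
  simp only [Set.mem_ofPred_eq, ← isOverconvergent_iff hε0 hε1]
  refine ⟨coeffDeriv_coeffIntegral, coeffIntegral_coeffDeriv,
    fun _ => isOverconvergent_coeffIntegral hmul fun _ => exists_val_natCast_le_mul_add hπ ν hν,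
    fun _ => isOverconvergent_coeffDeriv hmul fun _ => val_natCast_nonneg hπ ν hν,
    fun a _ ha0 => ?_⟩
  rw [coeffIntegral_coeffDeriv, ha0, Pi.single_zero, sub_zero]

/-- Let `K` be a characteristic-zero field, fraction field of a complete discrete
valuation ring `V` with uniformizer `π`, valuation `ν`, and absolute value
`|x| = ε ^ ν x` with `0 < ε < 1` (so `|π| = ε`).  Let `D ⊆ K^ℕ` be the coefficient
sequences of the weakly completed polynomial ring `K⟨x⟩†`, i.e. those with
`|aₙ| ≤ C |π|^(α n)` for some `C, α > 0`.  For the derivative `d` and the integration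
map `i` (in coefficients: `(d a) n = (n+1) a_{n+1}`, `(i a) 0 = 0`,
`(i a) n = a_{n-1}/n`), one has `d ∘ i = id` and `i ∘ d = id - P₀` where `P₀` keeps the
constant term; moreover `d` and `i` preserve `D`.  Consequently the kernel of the
evaluation-at-0 map on the two-term de Rham complex `K⟨x⟩† → K⟨x⟩†·dx` is contractible:
`i ∘ d = id` on sequences with vanishing constant term. -/
theorem dagger_deRham_contractible (V : Type*) [CommRing V] [IsDomain V]
    [IsDiscreteValuationRing V] (π : V) (hπ : Irreducible π)
    [IsAdicComplete (Ideal.span {π}) V]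
    (K : Type*) [Field K] [CharZero K] [Algebra V K] [IsFractionRing V K]
    (ν : K → ℤ)
    (hν : ∀ x : K, x ≠ 0 → ∃ u : Vˣ,
      x = algebraMap V K u * (algebraMap V K π) ^ (ν x))
    (hνπ : ν (algebraMap V K π) = 1)
    (ε : ℝ) (hε0 : 0 < ε) (hε1 : ε < 1)
    (D : Set (ℕ → K))
    (hD : D = {a : ℕ → K | ∃ C > (0 : ℝ), ∃ α > (0 : ℝ), ∀ n : ℕ,
      (if a n = 0 then (0 : ℝ) else ε ^ ν (a n)) ≤ C * ε ^ (α * n)})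
    (d i P₀ : (ℕ → K) → (ℕ → K))
    (hd : ∀ a n, d a n = ((n : K) + 1) * a (n + 1))
    (hi : ∀ a n, i a n = if n = 0 then 0 else a (n - 1) / (n : K))
    (hP₀ : ∀ a n, P₀ a n = if n = 0 then a 0 else 0) :
    (∀ a, d (i a) = a) ∧
    (∀ a, i (d a) = a - P₀ a) ∧
    (∀ a ∈ D, i a ∈ D) ∧ (∀ a ∈ D, d a ∈ D) ∧
    (∀ a ∈ D, a 0 = 0 → i (d a) = a) :=
  dagger_deRham_contractible_general V π hπ K ν hν ε hε0 hε1 D hD d i P₀ hd hi hP₀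
end

section
/- Let V be a complete discrete valuation ring with uniformizer π, and let P = V[x₁,…,x_n]. Let L be the V-submodule generated by 1, x₁,…,x_n and set M_j = L^j. Then the π-adic completion of the submodule M_j^{(π)} = Σ_{k≥0} π^k M_j^{k+1} of P, viewed inside the π-adic completion P̂ of P, consists exactly of the power series Σ_α λ_α x^α with λ_α ∈ V such that |π λ_α| ≤ |π|^{|α|/j} for all multi-indices α and |λ_α|/|π|^{|α|/j} → 0 as |α| → ∞. -/
/-!
A polynomial lies in `M_j^{(π)} = Σ_k π^k L^{j(k+1)}` exactly when each coefficient `λ_α` is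
divisible by `π^{(|α| - 1)/j}` (that is, `π^{⌈|α|/j⌉ - 1}`), since `L^{j(k+1)}` consists of the
polynomials of total degree at most `j(k+1)`. A power series is then a `π`-adic limit of a
Cauchy sequence in `M_j^{(π)}` iff the same divisibility holds for all its coefficients and, for
every `m`, the sharper divisibility by `π^{m + (|α| - 1)/j}` fails only for finitely many `α`:
the truncations of the series to these finite exceptional sets form the Cauchy sequence. In the
discrete valuation ring `V`, divisibility of `λ_α` by such powers of `π` translates into the
stated divisibility of `λ_α^j`, because `v(λ^j) = j v(λ)`.
-/

open Filter MvPolynomial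
open scoped Pointwise

theorem Nat.sub_one_div_le_iff {d j k : ℕ} (hj : 0 < j) : (d - 1) / j ≤ k ↔ d ≤ j * (k + 1) := by
  rw [Nat.div_le_iff_le_mul_add_pred hj, mul_add_one]
  omega

theorem Finsupp.eventually_cofinite_iff_exists_forall_degree_ge {σ : Type*} [Finite σ]
    {P : (σ →₀ ℕ) → Prop} : (∀ᶠ α in cofinite, P α) ↔ ∃ N, ∀ α, N ≤ α.degree → P α := by
  constructor
  · intro h
    obtain ⟨B, hB⟩ := ((eventually_cofinite.1 h).image degree).bddAbove
    exact ⟨B + 1, fun α hα => by_contra fun hP => by have := hB ⟨α, hP, rfl⟩; omega⟩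
  · rintro ⟨N, hN⟩
    exact eventually_cofinite.2 ((finite_of_degree_lt N).subset fun α hP =>
      lt_of_not_ge fun hα => hP (hN α hα))

section Divisibility

variable {M : Type*} [CommMonoidWithZero M] {p x : M}

theorem pow_dvd_pow_of_pow_add_dvd {d j m : ℕ} (hj : 0 < j)
    (h : p ^ (m + 1 + (d - 1) / j) ∣ x) : p ^ (d + m * j) ∣ x ^ j := by
  obtain ⟨c, rfl⟩ := h
  rw [mul_pow, ← pow_mul]
  refine (pow_dvd_pow p ?_).mul_right _
  have := (Nat.sub_one_div_le_iff hj (d := d)).1 le_rfl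
  nlinarith

variable [IsCancelMulZero M]

theorem Prime.pow_dvd_pow_iff_le_mul_emultiplicity (hp : Prime p) {a j : ℕ} :
    p ^ a ∣ x ^ j ↔ (a : ℕ∞) ≤ j * emultiplicity p x := by
  rw [pow_dvd_iff_le_emultiplicity, emultiplicity_pow hp]

theorem Prime.pow_dvd_mul_pow_iff (hp : Prime p) {d j : ℕ} (hj : 0 < j) :
    p ^ d ∣ (p * x) ^ j ↔ p ^ ((d - 1) / j) ∣ x := by
  have hpp : emultiplicity p p = 1 := by
    simpa using emultiplicity_pow_self hp.ne_zero hp.not_isUnit 1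
  rw [hp.pow_dvd_pow_iff_le_mul_emultiplicity, emultiplicity_mul hp, hpp,
    pow_dvd_iff_le_emultiplicity]
  generalize emultiplicity p x = e
  cases e with
  | top => simp [hj.ne']
  | coe t =>
    norm_cast
    rw [Nat.sub_one_div_le_iff hj, add_comm]

theorem Prime.pow_add_dvd_of_pow_dvd_pow (hp : Prime p) {d j m : ℕ} (hj : 0 < j)
    (h : p ^ (d + m * j) ∣ x ^ j) : p ^ (m + (d - 1) / j) ∣ x := by
  rw [hp.pow_dvd_pow_iff_le_mul_emultiplicity] at h
  rw [pow_dvd_iff_le_emultiplicity]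
  generalize emultiplicity p x = e at h
  cases e with
  | top => exact le_top
  | coe t =>
    norm_cast at h ⊢
    obtain ⟨s, rfl⟩ := Nat.exists_eq_add_of_le (show m ≤ t by nlinarith)
    rw [Nat.add_le_add_iff_left, Nat.sub_one_div_le_iff hj]
    nlinarith

end Divisibility

namespace MvPolynomial

variable {σ R : Type*} [CommSemiring R]

def coeffDvdSubmodule (π : R) (e : (σ →₀ ℕ) → ℕ) : Submodule R (MvPolynomial σ R) where
  carrier := {p | ∀ α, π ^ e α ∣ coeff α p}
  add_mem' hp hq α := by rw [coeff_add]; exact dvd_add (hp α) (hq α)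
  zero_mem' α := by simp
  smul_mem' c p hp α := by rw [coeff_smul, smul_eq_mul]; exact (hp α).mul_left c

section CoeffDvd

variable {π : R} {e : (σ →₀ ℕ) → ℕ}

@[simp]
theorem mem_coeffDvdSubmodule {p : MvPolynomial σ R} :
    p ∈ coeffDvdSubmodule π e ↔ ∀ α, π ^ e α ∣ coeff α p :=
  Iff.rfl

theorem monomial_mem_coeffDvdSubmodule {α : σ →₀ ℕ} {c : R} (h : π ^ e α ∣ c) :
    monomial α c ∈ coeffDvdSubmodule π e := fun β => by
  classical
  rw [coeff_monomial]
  split_ifs with hαβ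
  · exact hαβ ▸ h
  · exact dvd_zero _

theorem pow_smul_coeffDvdSubmodule (m : ℕ) :
    π ^ m • coeffDvdSubmodule π e = coeffDvdSubmodule π (fun α => m + e α) := by
  ext p
  constructor
  · rw [Submodule.mem_smul_pointwise_iff_exists]
    rintro ⟨q, hq, rfl⟩ α
    rw [coeff_smul, smul_eq_mul, pow_add]
    exact mul_dvd_mul_left _ (hq α)
  · intro hp
    rw [p.as_sum]
    refine Submodule.sum_mem _ fun α _ => ?_
    obtain ⟨c, hc⟩ := hp α
    rw [hc, pow_add, mul_assoc, ← smul_eq_mul, ← smul_monomial]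
    exact Submodule.smul_mem_pointwise_smul _ _ _
      (monomial_mem_coeffDvdSubmodule (dvd_mul_right _ _))

end CoeffDvd

section Powers

variable {L : Submodule R (MvPolynomial σ R)}

theorem span_insert_one_range_X_le_restrictTotalDegree :
    Submodule.span R (insert 1 (Set.range X)) ≤ restrictTotalDegree σ R 1 := by
  rw [Submodule.span_le]
  rintro p (rfl | ⟨i, rfl⟩) <;> rw [SetLike.mem_coe, mem_restrictTotalDegree]
  · simp
  · simpa [X] using totalDegree_monomial_le (Finsupp.single i 1) (1 : R)

theorem pow_le_restrictTotalDegree (hL : L ≤ restrictTotalDegree σ R 1) (m : ℕ) :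
    L ^ m ≤ restrictTotalDegree σ R m := by
  induction m with
  | zero => simp [Submodule.one_le, mem_restrictTotalDegree]
  | succ m ih =>
    rw [pow_succ, Submodule.mul_le]
    intro p hp q hq
    have hpq := add_le_add ((mem_restrictTotalDegree ..).1 (ih hp))
      ((mem_restrictTotalDegree ..).1 (hL hq))
    exact (mem_restrictTotalDegree ..).2 ((totalDegree_mul p q).trans hpq)

theorem monomial_mem_pow_degree (hX : ∀ i, X i ∈ L) (α : σ →₀ ℕ) (c : R) :
    monomial α c ∈ L ^ α.degree := by
  induction α using Finsupp.induction generalizing c with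
  | zero => exact Submodule.mem_one.2 ⟨c, by rw [algebraMap_eq, C_apply]⟩
  | single_add i k β _ _ ih =>
    rw [map_add, Finsupp.degree_single, pow_add, monomial_single_add]
    exact Submodule.mul_mem_mul (Submodule.pow_mem_pow _ (hX i) k) (ih c)

theorem monomial_mem_pow (h1 : 1 ∈ L) (hX : ∀ i, X i ∈ L) {α : σ →₀ ℕ} {m : ℕ}
    (hα : α.degree ≤ m) (c : R) : monomial α c ∈ L ^ m :=
  pow_le_pow_right' (Submodule.one_le.mpr h1) hα (monomial_mem_pow_degree hX α c)

theorem iSup_pow_smul_pow_eq_coeffDvdSubmodule {π : R} {j : ℕ} (hj : 0 < j)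
    (hL : L ≤ restrictTotalDegree σ R 1) (h1 : 1 ∈ L) (hX : ∀ i, X i ∈ L) :
    ⨆ k : ℕ, π ^ k • (L ^ j) ^ (k + 1) =
      coeffDvdSubmodule π (fun α => (α.degree - 1) / j) := by
  apply le_antisymm
  · refine iSup_le fun k p hp => ?_
    obtain ⟨q, hq, rfl⟩ := (Submodule.mem_smul_pointwise_iff_exists ..).1 hp
    rw [← pow_mul] at hq
    intro α
    rw [coeff_smul, smul_eq_mul]
    by_cases hα : α.degree ≤ j * (k + 1)
    · exact (pow_dvd_pow π ((Nat.sub_one_div_le_iff hj).2 hα)).mul_right _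
    · have hq' := (mem_restrictTotalDegree ..).1 (pow_le_restrictTotalDegree hL _ hq)
      rw [coeff_eq_zero_of_totalDegree_lt (by rw [← Finsupp.degree_apply]; omega), mul_zero]
      exact dvd_zero _
  · intro p hp
    rw [p.as_sum]
    refine Submodule.sum_mem _ fun α _ => ?_
    obtain ⟨c, hc⟩ := hp α
    rw [hc, ← smul_eq_mul, ← smul_monomial]
    refine Submodule.mem_iSup_of_mem _ (Submodule.smul_mem_pointwise_smul _ _ _ ?_)
    rw [← pow_mul]
    exact monomial_mem_pow h1 hX ((Nat.sub_one_div_le_iff hj).1 le_rfl) c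

end Powers

end MvPolynomial

namespace MvPowerSeries

variable {σ R : Type*} [CommRing R]

def IsAdicLimitIn (π : R) (S : Submodule R (MvPolynomial σ R)) (z : MvPowerSeries σ R) :
    Prop :=
  ∃ w : ℕ → MvPolynomial σ R, (∀ m, w m ∈ S) ∧ (∀ m m', m ≤ m' → w m' - w m ∈ π ^ m • S) ∧
    ∀ m α, coeff α z - MvPolynomial.coeff α (w m) ∈ Ideal.span {π ^ m}

variable {π : R} {e : (σ →₀ ℕ) → ℕ} {z : MvPowerSeries σ R}

theorem IsAdicLimitIn.pow_dvd_coeff (h : IsAdicLimitIn π (coeffDvdSubmodule π e) z) :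
    (∀ α, π ^ e α ∣ coeff α z) ∧ ∀ m, ∀ᶠ α in cofinite, π ^ (m + e α) ∣ coeff α z := by
  obtain ⟨w, hw, hcauchy, hlim⟩ := h
  have hlim' (m α) : π ^ m ∣ coeff α z - (w m).coeff α := Ideal.mem_span_singleton.1 (hlim m α)
  refine ⟨fun α => by simpa using dvd_add (hlim' (e α) α) (hw (e α) α), fun m => ?_⟩
  refine eventually_cofinite.2 ((w m).support.finite_toSet.subset fun α hα => ?_)
  by_contra hα0
  rw [Finset.mem_coe, MvPolynomial.mem_support_iff, not_not] at hα0
  have hM := hcauchy m (m + e α) (Nat.le_add_right _ _)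
  rw [pow_smul_coeffDvdSubmodule, mem_coeffDvdSubmodule] at hM
  have hwα := hM α
  rw [MvPolynomial.coeff_sub, hα0, sub_zero] at hwα
  exact hα (by simpa using dvd_add (hlim' _ α) hwα)

theorem isAdicLimitIn_coeffDvdSubmodule (h₀ : ∀ α, π ^ e α ∣ coeff α z)
    (h : ∀ m, ∀ᶠ α in cofinite, π ^ (m + e α) ∣ coeff α z) :
    IsAdicLimitIn π (coeffDvdSubmodule π e) z := by
  classical
  let F m := (eventually_cofinite.1 (h m)).toFinset
  have hF {m α} : α ∉ F m → π ^ (m + e α) ∣ coeff α z := by simp [F]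
  have hFmono {m m'} (hm : m ≤ m') : F m ⊆ F m' := fun α hα => by
    simp only [F, Set.Finite.mem_toFinset, Set.mem_ofPred_eq] at hα ⊢
    exact fun hα' => hα ((pow_dvd_pow π (by omega)).trans hα')
  refine ⟨fun m => truncFinset R (F m) z, fun m α => ?_, fun m m' hm => ?_, fun m α => ?_⟩
  · rw [coeff_truncFinset]
    split_ifs
    exacts [h₀ α, dvd_zero _]
  · rw [pow_smul_coeffDvdSubmodule]
    intro α
    rw [MvPolynomial.coeff_sub, coeff_truncFinset, coeff_truncFinset]
    by_cases hα : α ∈ F m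
    · simp [hα, hFmono hm hα]
    · split_ifs
      · simpa [hα] using hF hα
      · simp
  · rw [Ideal.mem_span_singleton, coeff_truncFinset]
    split_ifs with hα
    · simp
    · simpa using (pow_dvd_pow π (Nat.le_add_right m (e α))).trans (hF hα)

theorem isAdicLimitIn_coeffDvdSubmodule_iff :
    IsAdicLimitIn π (coeffDvdSubmodule π e) z ↔
      (∀ α, π ^ e α ∣ coeff α z) ∧ ∀ m, ∀ᶠ α in cofinite, π ^ (m + e α) ∣ coeff α z :=
  ⟨IsAdicLimitIn.pow_dvd_coeff, fun h => isAdicLimitIn_coeffDvdSubmodule h.1 h.2⟩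

end MvPowerSeries

open MvPowerSeries in
theorem completion_of_dagger_submodule_general
    (V : Type*) [CommRing V] [IsDomain V] [IsDiscreteValuationRing V]
    (π : V) (hπ : Irreducible π)
    (n j : ℕ) (hj : 0 < j)
    (L : Submodule V (MvPolynomial (Fin n) V))
    (hL : L = Submodule.span V
      (insert 1 (Set.range (MvPolynomial.X : Fin n → MvPolynomial (Fin n) V))))
    (Mjπ : Submodule V (MvPolynomial (Fin n) V))
    (hMjπ : Mjπ = ⨆ k : ℕ, π ^ k • (L ^ j) ^ (k + 1)) :
    {z : MvPowerSeries (Fin n) V |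
      ∃ w : ℕ → MvPolynomial (Fin n) V,
        (∀ m, w m ∈ Mjπ) ∧
        (∀ m m' : ℕ, m ≤ m' → w m' - w m ∈ π ^ m • Mjπ) ∧
        (∀ (m : ℕ) (α : Fin n →₀ ℕ),
          MvPowerSeries.coeff α z - MvPolynomial.coeff α (w m) ∈
            Ideal.span {π ^ m})} =
    {z : MvPowerSeries (Fin n) V |
      (∀ α : Fin n →₀ ℕ,
        π ^ (∑ i, α i) ∣ (π * MvPowerSeries.coeff α z) ^ j) ∧
      (∀ m : ℕ, ∃ N : ℕ, ∀ α : Fin n →₀ ℕ, N ≤ ∑ i, α i →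
        π ^ ((∑ i, α i) + m * j) ∣ (MvPowerSeries.coeff α z) ^ j)} := by
  subst hL
  rw [iSup_pow_smul_pow_eq_coeffDvdSubmodule hj span_insert_one_range_X_le_restrictTotalDegree
    (Submodule.subset_span (Set.mem_insert _ _))
    (fun i => Submodule.subset_span (Set.mem_insert_of_mem _ ⟨i, rfl⟩))] at hMjπ
  subst hMjπ
  have hp := hπ.prime
  ext z
  simp only [Set.mem_ofPred_eq, ← Finsupp.degree_eq_sum]
  change IsAdicLimitIn π _ z ↔ _
  simp only [isAdicLimitIn_coeffDvdSubmodule_iff, hp.pow_dvd_mul_pow_iff hj,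
    Finsupp.eventually_cofinite_iff_exists_forall_degree_ge]
  refine and_congr_right fun _ => ⟨fun h m => ?_, fun h m => ?_⟩
  · obtain ⟨N, hN⟩ := h (m + 1)
    exact ⟨N, fun α hα => pow_dvd_pow_of_pow_add_dvd hj (hN α hα)⟩
  · obtain ⟨N, hN⟩ := h m
    exact ⟨N, fun α hα => hp.pow_add_dvd_of_pow_dvd_pow hj (hN α hα)⟩

/-- Let `V` be a complete discrete valuation ring with uniformizer `π`, and
`P = V[x₁,…,xₙ]`.  Let `L` be the `V`-submodule generated by `1, x₁, …, xₙ`, `M_j = L^j`,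
and `M_j^{(π)} = Σ_{k≥0} π^k M_j^{k+1}`.  Then the image of the `π`-adic completion of
`M_j^{(π)}` inside the `π`-adic completion `P̂` (power series `z` that are coefficientwise
limits of Cauchy sequences in `M_j^{(π)}`) is exactly the set of power series
`Σ_α λ_α x^α` with `|π λ_α| ≤ |π|^{|α|/j}` for all `α` and `|λ_α|/|π|^{|α|/j} → 0` as
`|α| → ∞`; in divisibility form: `π^{|α|} ∣ (π λ_α)^j`, and for every `m` one has
`π^{|α| + mj} ∣ λ_α^j` for all `α` of sufficiently large total degree. -/
theorem completion_of_dagger_submodule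
    (V : Type*) [CommRing V] [IsDomain V] [IsDiscreteValuationRing V]
    (π : V) (hπ : Irreducible π) [IsAdicComplete (Ideal.span {π}) V]
    (n j : ℕ) (hj : 0 < j)
    (L : Submodule V (MvPolynomial (Fin n) V))
    (hL : L = Submodule.span V
      (insert 1 (Set.range (MvPolynomial.X : Fin n → MvPolynomial (Fin n) V))))
    (Mjπ : Submodule V (MvPolynomial (Fin n) V))
    (hMjπ : Mjπ = ⨆ k : ℕ, π ^ k • (L ^ j) ^ (k + 1)) :
    {z : MvPowerSeries (Fin n) V |
      ∃ w : ℕ → MvPolynomial (Fin n) V,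
        (∀ m, w m ∈ Mjπ) ∧
        (∀ m m' : ℕ, m ≤ m' → w m' - w m ∈ π ^ m • Mjπ) ∧
        (∀ (m : ℕ) (α : Fin n →₀ ℕ),
          MvPowerSeries.coeff α z - MvPolynomial.coeff α (w m) ∈
            Ideal.span {π ^ m})} =
    {z : MvPowerSeries (Fin n) V |
      (∀ α : Fin n →₀ ℕ,
        π ^ (∑ i, α i) ∣ (π * MvPowerSeries.coeff α z) ^ j) ∧
      (∀ m : ℕ, ∃ N : ℕ, ∀ α : Fin n →₀ ℕ, N ≤ ∑ i, α i →
        π ^ ((∑ i, α i) + m * j) ∣ (MvPowerSeries.coeff α z) ^ j)} :=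
  completion_of_dagger_submodule_general V π hπ n j hj L hL Mjπ hMjπ
end
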